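/- arXiv:2112.07062 — 3 statements merged into one kernel-verified Lean document; each statement's English description precedes it below -/
import Mathlib

section
/- Let H be a real inner product space and let a₀, b₀, a₁, b₁ ∈ H. Then ⟨a₀ + b₀, a₁ + b₁⟩ + ⟨a₁ − a₀, a₁⟩ + ⟨b₁ − b₀, b₁⟩ ≥ (1/2)(‖a₁‖² + ‖b₁‖²) − (1/2)(‖a₀‖² + ‖b₀‖²). -/
open RealInnerProductSpace

lemma grad_div_braces_eq {H : Type*} [NormedAddCommGroup H] [InnerProductSpace ℝ H]
    (a₀ b₀ a₁ b₁ : H) :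
    ⟪a₀ + b₀, a₁ + b₁⟫ + ⟪a₁ - a₀, a₁⟫ + ⟪b₁ - b₀, b₁⟫ =
      (1 / 2) * (‖a₁‖ ^ 2 + ‖b₁‖ ^ 2) - (1 / 2) * (‖a₀‖ ^ 2 + ‖b₀‖ ^ 2) +
        (1 / 2) * (‖a₀ + b₁‖ ^ 2 + ‖b₀ + a₁‖ ^ 2) := by
  simp only [norm_add_sq_real, inner_add_left, inner_add_right, inner_sub_left,
    real_inner_self_eq_norm_sq]
  ring

theorem grad_div_braces_lower_bound_2d
    {H : Type*} [NormedAddCommGroup H] [InnerProductSpace ℝ H]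
    (a₀ b₀ a₁ b₁ : H) :
    ⟪a₀ + b₀, a₁ + b₁⟫ + ⟪a₁ - a₀, a₁⟫ + ⟪b₁ - b₀, b₁⟫ ≥
      (1 / 2) * (‖a₁‖ ^ 2 + ‖b₁‖ ^ 2) - (1 / 2) * (‖a₀‖ ^ 2 + ‖b₀‖ ^ 2) := by
  rw [grad_div_braces_eq]
  have hsq : 0 ≤ (1 / 2 : ℝ) * (‖a₀ + b₁‖ ^ 2 + ‖b₀ + a₁‖ ^ 2) := by positivity
  linarith
end

section
/- Let H be a real inner product space, let γ > 0 and α ≥ 0 be real numbers. For triples x = (a₁,b₁,c₁) and y = (a₀,b₀,c₀) of elements of H, write d(x) = a₁+b₁+c₁, d(y) = a₀+b₀+c₀, define the symmetric bilinear form B(x,y) = (γ+α)(⟨a₁,a₀⟩ + ⟨b₁,b₀⟩ + ⟨c₁,c₀⟩) − γ⟨d(x),d(y)⟩ and B*(x,y) = B(x,y) − ((α−2γ)/3)⟨d(x),d(y)⟩, with induced quadratic forms ‖x‖²_{B*} = B*(x,x). Then γ‖d(x)‖² + B(x−y, x) = (1/2)(‖x‖²_{B*} − ‖y‖²_{B*}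 + ‖x−y‖²_{B*}) + ((2γ−α)/6)(‖d(x)‖² − ‖d(y)‖²) + (2/3)(α − γ/2)‖d(x)‖² + ((2γ−α)/6)‖d(x) + d(y)‖². -/
open RealInnerProductSpace

variable {H : Type*} [NormedAddCommGroup H] [InnerProductSpace ℝ H]

/-- The abstract divergence of a triple of diagonal derivative components. -/
def dDiv (x : H × H × H) : H := x.1 + x.2.1 + x.2.2

/-- The sparse grad-div bilinear form `B` of the paper. -/
noncomputable def Bform (γ α : ℝ) (x y : H × H × H) : ℝ :=
  (γ + α) * (⟪x.1, y.1⟫ + ⟪x.2.1, y.2.1⟫ + ⟪x.2.2, y.2.2⟫) -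
    γ * ⟪dDiv x, dDiv y⟫

/-- The modified bilinear form `B*` of the paper. -/
noncomputable def Bstar (γ α : ℝ) (x y : H × H × H) : ℝ :=
  Bform γ α x y - ((α - 2 * γ) / 3) * ⟪dDiv x, dDiv y⟫


/-! `B` is the symmetric form `B*` plus `((α - 2γ)/3)⟪d ·, d ·⟫`. Polarizing `B*` turns
`B*(x - y, x)` into the half-sum of `B*`-norms, and what is left is a scalar identity in the
Gram entries of `d(x)` and `d(y)`. -/

lemma LinearMap.BilinForm.IsSymm.apply_sub_left_self {R M : Type*} [Field R] [NeZero (2 : R)]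
    [AddCommGroup M] [Module R M] {B : LinearMap.BilinForm R M} (hB : B.IsSymm) (x y : M) :
    B (x - y) x = (B x x - B y y + B (x - y) (x - y)) / 2 := by
  simp only [map_sub, LinearMap.sub_apply]
  rw [hB.eq y x]
  field_simp
  ring

omit [InnerProductSpace ℝ H] in
lemma dDiv_sub (x y : H × H × H) : dDiv (x - y) = dDiv x - dDiv y := by
  simp only [dDiv, Prod.fst_sub, Prod.snd_sub]
  abel

lemma Bform_eq_Bstar_add (γ α : ℝ) (x y : H × H × H) :
    Bform γ α x y = Bstar γ α x y + ((α - 2 * γ) / 3) * ⟪dDiv x, dDiv y⟫ :=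
  (sub_add_cancel _ _).symm

noncomputable def bstarBilin (γ α : ℝ) : LinearMap.BilinForm ℝ (H × H × H) :=
  LinearMap.mk₂ ℝ (Bstar γ α)
    (fun _ _ _ => by
      simp only [Bstar, Bform, dDiv, Prod.fst_add, Prod.snd_add, inner_add_left]; ring)
    (fun _ _ _ => by
      simp only [Bstar, Bform, dDiv, Prod.smul_fst, Prod.smul_snd, ← smul_add,
        real_inner_smul_left, smul_eq_mul]; ring)
    (fun _ _ _ => by
      simp only [Bstar, Bform, dDiv, Prod.fst_add, Prod.snd_add, inner_add_right]; ring)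
    (fun _ _ _ => by
      simp only [Bstar, Bform, dDiv, Prod.smul_fst, Prod.smul_snd, ← smul_add,
        real_inner_smul_right, smul_eq_mul]; ring)

lemma bstarBilin_apply (γ α : ℝ) (x y : H × H × H) :
    bstarBilin γ α x y = Bstar γ α x y :=
  rfl

lemma isSymm_bstarBilin (γ α : ℝ) : (bstarBilin (H := H) γ α).IsSymm :=
  LinearMap.BilinForm.isSymm_def.2 fun x y => by
    simp only [bstarBilin_apply, Bstar, Bform, real_inner_comm x.1, real_inner_comm x.2.1,
      real_inner_comm x.2.2, real_inner_comm (dDiv x)]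

lemma divergence_identity (γ α : ℝ) (p q : H) :
    γ * ‖p‖ ^ 2 + ((α - 2 * γ) / 3) * ⟪p - q, p⟫ =
      ((2 * γ - α) / 6) * (‖p‖ ^ 2 - ‖q‖ ^ 2) + (2 / 3) * (α - γ / 2) * ‖p‖ ^ 2 +
        ((2 * γ - α) / 6) * ‖p + q‖ ^ 2 := by
  rw [norm_add_sq_real, inner_sub_left, real_inner_self_eq_norm_sq, real_inner_comm q p]
  ring

theorem braces_identity_3d_general (γ α : ℝ)
    (x y : H × H × H) :
    γ * ‖dDiv x‖ ^ 2 + Bform γ α (x - y) x =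
      (1 / 2) * (Bstar γ α x x - Bstar γ α y y + Bstar γ α (x - y) (x - y)) +
        ((2 * γ - α) / 6) * (‖dDiv x‖ ^ 2 - ‖dDiv y‖ ^ 2) +
        (2 / 3) * (α - γ / 2) * ‖dDiv x‖ ^ 2 +
        ((2 * γ - α) / 6) * ‖dDiv x + dDiv y‖ ^ 2 := by
  have hpolar := (isSymm_bstarBilin γ α).apply_sub_left_self x y
  simp only [bstarBilin_apply] at hpolar
  rw [Bform_eq_Bstar_add, hpolar, dDiv_sub]
  linarith [divergence_identity γ α (dDiv x) (dDiv y)]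

theorem braces_identity_3d (γ α : ℝ) (hγ : 0 < γ) (hα : 0 ≤ α)
    (x y : H × H × H) :
    γ * ‖dDiv x‖ ^ 2 + Bform γ α (x - y) x =
      (1 / 2) * (Bstar γ α x x - Bstar γ α y y + Bstar γ α (x - y) (x - y)) +
        ((2 * γ - α) / 6) * (‖dDiv x‖ ^ 2 - ‖dDiv y‖ ^ 2) +
        (2 / 3) * (α - γ / 2) * ‖dDiv x‖ ^ 2 +
        ((2 * γ - α) / 6) * ‖dDiv x + dDiv y‖ ^ 2 :=
  braces_identity_3d_general γ α x y
end

section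
/- Let X be a finite-dimensional real inner product space, D : X → X a linear map, C > 0, c > 0, h > 0 and λ ≥ 0 real numbers, and suppose ‖v‖ ≤ C‖Dv‖ and ‖Dv‖ ≤ c·h⁻¹·‖v‖ for all v ∈ X. Then there is a unique linear map T : X → X satisfying ⟨Tw, v⟩ = ⟨w, v⟩ + λ⟨Dw, Dv⟩ for all w, v ∈ X; T is bijective, and its condition number satisfies ‖T‖·‖T⁻¹‖ ≤ (1 + λ·c²·h⁻²)/(1 + λ/C²), where ‖·‖ denotes the operator norm. -/
/-!
The operator is `T = 1 + λ D*D`, whose bilinear form `⟪T w, v⟫ = ⟪w, v⟫ + λ⟪D w, D v⟫` is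
bounded with constant `1 + λ (c/h)²` by the inverse estimate and coercive with constant
`1 + λ / C²` by the Poincaré–Friedrichs inequality. Taking `v = T w` in the first bound gives
`‖T‖ ≤ 1 + λ (c/h)²`; Cauchy–Schwarz in the second gives `(1 + λ / C²) ‖w‖ ≤ ‖T w‖`, hence
`‖T⁻¹‖ ≤ (1 + λ / C²)⁻¹`.
-/

open RealInnerProductSpace

section BoundedCoerciveOperator

variable {E : Type*} [NormedAddCommGroup E] [InnerProductSpace ℝ E] (T : E →ₗ[ℝ] E)

theorem LinearMap.opNorm_toContinuousLinearMap_le_of_inner_le [FiniteDimensional ℝ E] {M : ℝ}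
    (hM0 : 0 ≤ M) (hM : ∀ w v, ⟪T w, v⟫ ≤ M * ‖w‖ * ‖v‖) :
    ‖LinearMap.toContinuousLinearMap T‖ ≤ M := by
  refine ContinuousLinearMap.opNorm_le_bound _ hM0 fun w => ?_
  rw [LinearMap.coe_toContinuousLinearMap']
  rcases (norm_nonneg (T w)).eq_or_lt with h0 | hpos
  · rw [← h0]
    positivity
  · have h := hM w (T w)
    rw [real_inner_self_eq_norm_sq] at h
    nlinarith

theorem LinearMap.mul_norm_le_norm_apply_of_coercive {m : ℝ}
    (hm : ∀ w, m * ‖w‖ ^ 2 ≤ ⟪T w, w⟫) (w : E) : m * ‖w‖ ≤ ‖T w‖ := by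
  rcases (norm_nonneg w).eq_or_lt with h0 | hpos
  · rw [← h0, mul_zero]
    exact norm_nonneg _
  · have h := (hm w).trans (real_inner_le_norm (T w) w)
    nlinarith

theorem LinearMap.opNorm_toContinuousLinearMap_le_inv_of_coercive [FiniteDimensional ℝ E] {m : ℝ}
    (hm0 : 0 < m) (hm : ∀ w, m * ‖w‖ ^ 2 ≤ ⟪T w, w⟫) {S : E →ₗ[ℝ] E}
    (hS : Function.RightInverse S T) :
    ‖LinearMap.toContinuousLinearMap S‖ ≤ m⁻¹ := by
  refine ContinuousLinearMap.opNorm_le_bound _ (inv_nonneg.mpr hm0.le) fun u => ?_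
  rw [LinearMap.coe_toContinuousLinearMap', inv_mul_eq_div, le_div_iff₀ hm0, mul_comm]
  simpa only [hS u] using T.mul_norm_le_norm_apply_of_coercive hm (S u)

theorem LinearMap.injective_of_coercive {m : ℝ} (hm0 : 0 < m)
    (hm : ∀ w, m * ‖w‖ ^ 2 ≤ ⟪T w, w⟫) : Function.Injective T := by
  refine (injective_iff_map_eq_zero T).mpr fun w hw => norm_eq_zero.mp ?_
  have := T.mul_norm_le_norm_apply_of_coercive hm w
  rw [hw, norm_zero] at this
  exact le_antisymm (nonpos_of_mul_nonpos_right this hm0) (norm_nonneg w)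

end BoundedCoerciveOperator

section ShiftedDirichletForm

variable {E F : Type*} [NormedAddCommGroup E] [InnerProductSpace ℝ E]
  [NormedAddCommGroup F] [InnerProductSpace ℝ F]

theorem existsUnique_inner_map_eq_inner_add_smul_inner [FiniteDimensional ℝ E]
    [FiniteDimensional ℝ F] (D : E →ₗ[ℝ] F) (lam : ℝ) :
    ∃! T : E →ₗ[ℝ] E, ∀ w v, ⟪T w, v⟫ = ⟪w, v⟫ + lam * ⟪D w, D v⟫ := by
  have hform : ∀ w v,
      ⟪(LinearMap.id + lam • (LinearMap.adjoint D ∘ₗ D) : E →ₗ[ℝ] E) w, v⟫ =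
      ⟪w, v⟫ + lam * ⟪D w, D v⟫ := fun w v => by
    rw [LinearMap.add_apply, LinearMap.smul_apply, LinearMap.comp_apply, inner_add_left,
      real_inner_smul_left, LinearMap.adjoint_inner_left, LinearMap.id_apply]
  refine ⟨_, hform, fun T hT => LinearMap.ext fun w => ext_inner_right ℝ fun v => ?_⟩
  rw [hT, hform]

variable {D : E →ₗ[ℝ] F} {lam : ℝ} {T : E →ₗ[ℝ] E}

theorem inner_apply_le_of_norm_map_le
    (hT : ∀ w v, ⟪T w, v⟫ = ⟪w, v⟫ + lam * ⟪D w, D v⟫)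
    (hlam : 0 ≤ lam) {K : ℝ} (hK : ∀ v, ‖D v‖ ≤ K * ‖v‖) (w v : E) :
    ⟪T w, v⟫ ≤ (1 + lam * K ^ 2) * ‖w‖ * ‖v‖ := by
  have hDD : ⟪D w, D v⟫ ≤ K ^ 2 * ‖w‖ * ‖v‖ :=
    calc ⟪D w, D v⟫ ≤ ‖D w‖ * ‖D v‖ := real_inner_le_norm _ _
      _ ≤ (K * ‖w‖) * (K * ‖v‖) :=
        mul_le_mul (hK w) (hK v) (norm_nonneg _) ((norm_nonneg _).trans (hK w))
      _ = K ^ 2 * ‖w‖ * ‖v‖ := by ring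
  calc ⟪T w, v⟫ = ⟪w, v⟫ + lam * ⟪D w, D v⟫ := hT w v
    _ ≤ ‖w‖ * ‖v‖ + lam * (K ^ 2 * ‖w‖ * ‖v‖) :=
      add_le_add (real_inner_le_norm _ _) (mul_le_mul_of_nonneg_left hDD hlam)
    _ = (1 + lam * K ^ 2) * ‖w‖ * ‖v‖ := by ring

theorem mul_norm_sq_le_inner_apply_of_norm_le
    (hT : ∀ w v, ⟪T w, v⟫ = ⟪w, v⟫ + lam * ⟪D w, D v⟫)
    (hlam : 0 ≤ lam) {C : ℝ} (hC : ∀ v, ‖v‖ ≤ C * ‖D v‖) (w : E) :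
    (1 + lam / C ^ 2) * ‖w‖ ^ 2 ≤ ⟪T w, w⟫ := by
  have hsq : ‖w‖ ^ 2 ≤ C ^ 2 * ‖D w‖ ^ 2 := by
    rw [← mul_pow]
    exact pow_le_pow_left₀ (norm_nonneg w) (hC w) 2
  have hdiv : ‖w‖ ^ 2 / C ^ 2 ≤ ‖D w‖ ^ 2 :=
    div_le_of_le_mul₀ (sq_nonneg C) (sq_nonneg _) (by rwa [mul_comm])
  calc (1 + lam / C ^ 2) * ‖w‖ ^ 2 = ‖w‖ ^ 2 + lam * (‖w‖ ^ 2 / C ^ 2) := by ring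
    _ ≤ ‖w‖ ^ 2 + lam * ‖D w‖ ^ 2 := by gcongr
    _ = ⟪T w, w⟫ := by rw [hT, real_inner_self_eq_norm_sq, real_inner_self_eq_norm_sq]

end ShiftedDirichletForm

theorem step2_condition_number_general
    {X : Type*} [NormedAddCommGroup X] [InnerProductSpace ℝ X]
    [FiniteDimensional ℝ X]
    (D : X →ₗ[ℝ] X) (C c h lam : ℝ)
    (hlam : 0 ≤ lam)
    (hPF : ∀ v : X, ‖v‖ ≤ C * ‖D v‖)
    (hinv : ∀ v : X, ‖D v‖ ≤ c * h⁻¹ * ‖v‖) :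
    (∃! T : X →ₗ[ℝ] X, ∀ w v : X, ⟪T w, v⟫ = ⟪w, v⟫ + lam * ⟪D w, D v⟫) ∧
      ∀ T : X →ₗ[ℝ] X, (∀ w v : X, ⟪T w, v⟫ = ⟪w, v⟫ + lam * ⟪D w, D v⟫) →
        Function.Bijective T ∧
          ∀ S : X →ₗ[ℝ] X, Function.LeftInverse S T → Function.RightInverse S T →
            ‖LinearMap.toContinuousLinearMap T‖ *
                ‖LinearMap.toContinuousLinearMap S‖ ≤
              (1 + lam * c ^ 2 * h⁻¹ ^ 2) / (1 + lam / C ^ 2) := by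
  refine ⟨existsUnique_inner_map_eq_inner_add_smul_inner D lam, fun T hT => ?_⟩
  have hcoer := mul_norm_sq_le_inner_apply_of_norm_le hT hlam hPF
  have hm : 0 < 1 + lam / C ^ 2 := by positivity
  have hinj := T.injective_of_coercive hm hcoer
  refine ⟨⟨hinj, LinearMap.injective_iff_surjective.mp hinj⟩, fun S _ hS => ?_⟩
  have hTnorm : ‖LinearMap.toContinuousLinearMap T‖ ≤ 1 + lam * c ^ 2 * h⁻¹ ^ 2 := by
    rw [mul_assoc, ← mul_pow]
    exact T.opNorm_toContinuousLinearMap_le_of_inner_le (by positivity)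
      (inner_apply_le_of_norm_map_le hT hlam hinv)
  calc ‖LinearMap.toContinuousLinearMap T‖ * ‖LinearMap.toContinuousLinearMap S‖
      ≤ (1 + lam * c ^ 2 * h⁻¹ ^ 2) * (1 + lam / C ^ 2)⁻¹ :=
        mul_le_mul hTnorm (T.opNorm_toContinuousLinearMap_le_inv_of_coercive hm hcoer hS)
          (norm_nonneg _) ((norm_nonneg _).trans hTnorm)
    _ = (1 + lam * c ^ 2 * h⁻¹ ^ 2) / (1 + lam / C ^ 2) := (div_eq_mul_inv _ _).symm

theorem step2_condition_number
    {X : Type*} [NormedAddCommGroup X] [InnerProductSpace ℝ X]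
    [FiniteDimensional ℝ X]
    (D : X →ₗ[ℝ] X) (C c h lam : ℝ)
    (hC : 0 < C) (hc : 0 < c) (hh : 0 < h) (hlam : 0 ≤ lam)
    (hPF : ∀ v : X, ‖v‖ ≤ C * ‖D v‖)
    (hinv : ∀ v : X, ‖D v‖ ≤ c * h⁻¹ * ‖v‖) :
    (∃! T : X →ₗ[ℝ] X, ∀ w v : X, ⟪T w, v⟫ = ⟪w, v⟫ + lam * ⟪D w, D v⟫) ∧
      ∀ T : X →ₗ[ℝ] X, (∀ w v : X, ⟪T w, v⟫ = ⟪w, v⟫ + lam * ⟪D w, D v⟫) →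
        Function.Bijective T ∧
          ∀ S : X →ₗ[ℝ] X, Function.LeftInverse S T → Function.RightInverse S T →
            ‖LinearMap.toContinuousLinearMap T‖ *
                ‖LinearMap.toContinuousLinearMap S‖ ≤
              (1 + lam * c ^ 2 * h⁻¹ ^ 2) / (1 + lam / C ^ 2) :=
  step2_condition_number_general D C c h lam hlam hPF hinv
end
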